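/- For any graph G and PSD forcing set B, the PSD propagation time of B in G equals the maximum, over connected components C of G − B, of the PSD propagation time of B in the induced subgraph G[V(C) ∪ B]; moreover this is at most the maximum number of vertices in a component of G − B. -/

import Mathlib

open SimpleGraph Set

variable {V : Type*}

/-- The subgraph of `G` obtained by deleting the vertices of `B`
(kept as isolated vertices). -/
def delVerts (G : SimpleGraph V) (B : Set V) : SimpleGraph V where
  Adj a b := G.Adj a b ∧ a ∉ B ∧ b ∉ B
  symm := ⟨fun _ _ ⟨h, ha, hb⟩ => ⟨h.symm, hb, ha⟩⟩
  loopless := ⟨fun a ⟨h, _, _⟩ => G.ne_of_adj h rfl⟩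

/-- `u` may PSD-force `w` when the set of blue vertices is `B`:  `u` is blue, `w` is a white
neighbor of `u`, and `w` is the unique white neighbor of `u` in the component of `G - B`
containing `w`. -/
def PSDForce (G : SimpleGraph V) (B : Set V) (u w : V) : Prop :=
  u ∈ B ∧ w ∉ B ∧ G.Adj u w ∧
    ∀ x, G.Adj u x → x ∉ B → (delVerts G B).Reachable x w → x = w

/-- One round of simultaneous PSD forcing starting from blue set `B`. -/
def psdStep (G : SimpleGraph V) (B : Set V) : Set V :=
  B ∪ {w | ∃ u, PSDForce G B u w}

/-- `B` is a PSD forcing set of `G`. -/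
def IsPSDForcingSet (G : SimpleGraph V) (B : Set V) : Prop :=
  ∃ t, (psdStep G)^[t] B = Set.univ

/-- The PSD propagation time `pt_+(G; B)` of the set `B` in `G`. -/
noncomputable def psdPropTime (G : SimpleGraph V) (B : Set V) : ℕ :=
  sInf {t | (psdStep G)^[t] B = Set.univ}

/-- The PSD zero forcing number `Z_+(G)`. -/
noncomputable def psdZ (G : SimpleGraph V) : ℕ :=
  sInf {k | ∃ B : Set V, IsPSDForcingSet G B ∧ B.ncard = k}

/-- The `k`-PSD propagation time `pt_+(G, k)`: the minimum of `pt_+(G; B)` over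
PSD forcing sets `B` of size `k`. -/
noncomputable def psdPt (G : SimpleGraph V) (k : ℕ) : ℕ :=
  sInf {t | ∃ B : Set V, IsPSDForcingSet G B ∧ B.ncard = k ∧ psdPropTime G B = t}

/-- The PSD propagation time `pt_+(G) = pt_+(G, Z_+(G))`. -/
noncomputable def psdPtG (G : SimpleGraph V) : ℕ := psdPt G (psdZ G)

/-- The PSD propagation time of `B` within the induced subgraph `G[U]` (for `B ⊆ U`),
realized by making the vertices outside `U` isolated and initially blue. -/
noncomputable def psdPropTimeOn (G : SimpleGraph V) (U B : Set V) : ℕ :=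
  psdPropTime (delVerts G Uᶜ) (B ∪ Uᶜ)

/-- The vertex set of the component of `G - B` containing the white vertex `w`. -/
def compOf (G : SimpleGraph V) (B : Set V) (w : V) : Set V :=
  {x | x ∉ B ∧ (delVerts G B).Reachable x w}


/-! A PSD force only inspects the white component of the forced vertex, and the white
components of later rounds refine those of `G - B`. Hence if `U ⊇ B` and `U \ B` is a union of
components of `G - B`, the forcing process in `G[U]` started from `B` is the global process seen
through `U`: after `t` rounds all of `U` is blue in `G[U]` iff it is blue in `G`. As `G` is all
blue exactly when every component is, `pt_+(G;B) ≤ t` iff `pt_+(G[C ∪ B];B) ≤ t` for every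
component `C`, which is the maximum formula. A round that forces nothing leaves the process stuck
forever, so before completion every round forces a vertex of `C` and `pt_+(G[C ∪ B];B) ≤ |C|`. -/

section InflationaryIterate

variable {f : Set V → Set V}

lemma iterate_eq_univ_of_le (hf : ∀ s, s ⊆ f s) {s : Set V} {t t' : ℕ}
    (ht : f^[t] s = univ) (htt' : t ≤ t') : f^[t'] s = univ := by
  obtain ⟨k, rfl⟩ := Nat.exists_eq_add_of_le htt'
  rw [add_comm, Function.iterate_add_apply, ht,
    Function.iterate_fixed (univ_subset_iff.mp (hf univ)) k]

lemma iterate_ncard_compl_eq_univ [Finite V] (hf : ∀ s, s ⊆ f s) {s : Set V} {t : ℕ}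
    (ht : f^[t] s = univ) : f^[sᶜ.ncard] s = univ := by
  induction t generalizing s with
  | zero =>
    obtain rfl : s = univ := ht
    simp
  | succ t ih =>
    have hstep := ih (s := f s) ht
    by_cases hfix : f s = s
    · rwa [hfix] at hstep
    · have hlt : (f s)ᶜ.ncard < sᶜ.ncard :=
        ncard_lt_ncard (ssubset_of_subset_of_ne (compl_subset_compl.mpr (hf s))
          (fun h => hfix (compl_injective h)))
      exact iterate_eq_univ_of_le hf (t := (f s)ᶜ.ncard + 1) hstep hlt

end InflationaryIterate

/-- For `B ⊆ U`, `ClosedUnderAdj (delVerts G B) U` says that `U \ B` is a union of components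
of `G - B`. -/
def ClosedUnderAdj (H : SimpleGraph V) (U : Set V) : Prop :=
  ∀ ⦃a b⦄, H.Adj a b → a ∈ U → b ∈ U

lemma ClosedUnderAdj.mem_of_reachable {H : SimpleGraph V} {U : Set V} (hU : ClosedUnderAdj H U)
    {x w : V} (h : H.Reachable x w) (hw : w ∈ U) : x ∈ U := by
  obtain ⟨p⟩ := h
  induction p with
  | nil => exact hw
  | cons hadj _ ih => exact hU hadj.symm (ih hw)

section PSD

variable {G : SimpleGraph V} {B S U : Set V}

lemma delVerts_anti (h : S ⊆ B) : delVerts G B ≤ delVerts G S :=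
  fun _ _ hadj => ⟨hadj.1, fun c => hadj.2.1 (h c), fun c => hadj.2.2 (h c)⟩

lemma delVerts_delVerts (G : SimpleGraph V) (A B : Set V) :
    delVerts (delVerts G A) B = delVerts G (A ∪ B) := by
  ext a b
  simp only [delVerts, mem_union]
  tauto

lemma subset_psdStep (G : SimpleGraph V) (B : Set V) : B ⊆ psdStep G B :=
  subset_union_left

lemma subset_iterate_psdStep (G : SimpleGraph V) (B : Set V) (t : ℕ) :
    B ⊆ (psdStep G)^[t] B :=
  Function.id_le_iterate_of_id_le (subset_psdStep G) t B

lemma psdPropTime_le_iff (hB : IsPSDForcingSet G B) {t : ℕ} :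
    psdPropTime G B ≤ t ↔ (psdStep G)^[t] B = univ :=
  ⟨iterate_eq_univ_of_le (subset_psdStep G) (Nat.sInf_mem hB), fun h => Nat.sInf_le h⟩

lemma psdPropTime_le_ncard_compl [Finite V] (hB : IsPSDForcingSet G B) :
    psdPropTime G B ≤ Bᶜ.ncard :=
  Nat.sInf_le (iterate_ncard_compl_eq_univ (subset_psdStep G) hB.choose_spec)

lemma reachable_delVerts_union_compl (hBS : B ⊆ S)
    (hU : ClosedUnderAdj (delVerts G B) U)
    {x w : V} (h : (delVerts G S).Reachable x w) (hw : w ∈ U) :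
    (delVerts G (S ∪ Uᶜ)).Reachable x w := by
  obtain ⟨p⟩ := h
  induction p with
  | nil => rfl
  | @cons a y _ hadj q ih =>
    have hyU : y ∈ U := hU.mem_of_reachable (q.reachable.mono (delVerts_anti hBS)) hw
    have haU : a ∈ U := hU (delVerts_anti hBS hadj.symm) hyU
    have hadj' : (delVerts G (S ∪ Uᶜ)).Adj a y :=
      ⟨hadj.1, by simp [hadj.2.1, haU], by simp [hadj.2.2, hyU]⟩
    exact hadj'.reachable.trans (ih hw)

lemma psdStep_delVerts_compl (hBS : B ⊆ S) (hBU : B ⊆ U)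
    (hU : ClosedUnderAdj (delVerts G B) U) :
    psdStep (delVerts G Uᶜ) (S ∪ Uᶜ) = psdStep G S ∪ Uᶜ := by
  have hdel : delVerts (delVerts G Uᶜ) (S ∪ Uᶜ) = delVerts G (S ∪ Uᶜ) := by
    rw [delVerts_delVerts, union_left_comm, union_self]
  ext v
  simp only [psdStep, PSDForce, hdel, mem_union, mem_ofPred_eq]
  constructor
  · rintro ((hv | hv) | ⟨u, huS, hvS, ⟨hGuv, huU, hvU⟩, hforce⟩)
    · exact Or.inl (Or.inl hv)
    · exact Or.inr hv
    · have hvU' : v ∈ U := not_not.mp hvU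
      refine Or.inl (Or.inr ⟨u, huS.resolve_right huU, fun h => hvS (Or.inl h), hGuv,
        fun x hux hxS hxv => ?_⟩)
      have hxU : x ∈ U := hU.mem_of_reachable (hxv.mono (delVerts_anti hBS)) hvU'
      exact hforce x ⟨hux, huU, not_not.mpr hxU⟩ (by simp [hxS, hxU])
        (reachable_delVerts_union_compl hBS hU hxv hvU')
  · rintro ((hv | ⟨u, huS, hvS, hGuv, hforce⟩) | hvU)
    · exact Or.inl (Or.inl hv)
    · by_cases hvU : v ∈ U
      · have huU : u ∈ U := by
          by_cases huB : u ∈ B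
          · exact hBU huB
          · exact hU ⟨hGuv.symm, fun h => hvS (hBS h), huB⟩ hvU
        refine Or.inr ⟨u, Or.inl huS, by simp [hvS, hvU],
          ⟨hGuv, not_not.mpr huU, not_not.mpr hvU⟩, fun x hux hxS hxv =>
            hforce x hux.1 (fun h => hxS (Or.inl h)) (hxv.mono (delVerts_anti subset_union_left))⟩
      · exact Or.inl (Or.inr hvU)
    · exact Or.inl (Or.inr hvU)

lemma iterate_psdStep_delVerts_compl (hBU : B ⊆ U)
    (hU : ClosedUnderAdj (delVerts G B) U) (t : ℕ) :
    (psdStep (delVerts G Uᶜ))^[t] (B ∪ Uᶜ) = (psdStep G)^[t] B ∪ Uᶜ := by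
  induction t with
  | zero => rfl
  | succ t ih =>
    rw [Function.iterate_succ_apply', ih,
      psdStep_delVerts_compl (subset_iterate_psdStep G B t) hBU hU,
      ← Function.iterate_succ_apply' (psdStep G)]

lemma iterate_psdStep_delVerts_compl_eq_univ_iff (hBU : B ⊆ U)
    (hU : ClosedUnderAdj (delVerts G B) U) (t : ℕ) :
    (psdStep (delVerts G Uᶜ))^[t] (B ∪ Uᶜ) = univ ↔ U ⊆ (psdStep G)^[t] B := by
  rw [iterate_psdStep_delVerts_compl hBU hU, union_comm, ← compl_subset_iff_union, compl_compl]

lemma isPSDForcingSet_delVerts_compl (hB : IsPSDForcingSet G B) (hBU : B ⊆ U)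
    (hU : ClosedUnderAdj (delVerts G B) U) :
    IsPSDForcingSet (delVerts G Uᶜ) (B ∪ Uᶜ) := by
  obtain ⟨t, ht⟩ := hB
  exact ⟨t, (iterate_psdStep_delVerts_compl_eq_univ_iff hBU hU t).mpr (ht ▸ subset_univ U)⟩

lemma psdPropTimeOn_le_iff (hB : IsPSDForcingSet G B) (hBU : B ⊆ U)
    (hU : ClosedUnderAdj (delVerts G B) U) {t : ℕ} :
    psdPropTimeOn G U B ≤ t ↔ U ⊆ (psdStep G)^[t] B :=
  (psdPropTime_le_iff (isPSDForcingSet_delVerts_compl hB hBU hU)).trans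
    (iterate_psdStep_delVerts_compl_eq_univ_iff hBU hU t)

lemma psdPropTimeOn_le_ncard_diff [Finite V] (hB : IsPSDForcingSet G B) (hBU : B ⊆ U)
    (hU : ClosedUnderAdj (delVerts G B) U) :
    psdPropTimeOn G U B ≤ (U \ B).ncard := by
  have hcompl : (B ∪ Uᶜ)ᶜ = U \ B := by rw [compl_union, compl_compl, sdiff_eq, inter_comm]
  rw [psdPropTimeOn, ← hcompl]
  exact psdPropTime_le_ncard_compl (isPSDForcingSet_delVerts_compl hB hBU hU)

end PSD

section Components

variable {G : SimpleGraph V} {B : Set V} {w : V}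

lemma mem_compOf_self (hw : w ∉ B) : w ∈ compOf G B w :=
  ⟨hw, Reachable.refl w⟩

lemma closedUnderAdj_compOf_union : ClosedUnderAdj (delVerts G B) (compOf G B w ∪ B) :=
  fun _ _ hadj ha => Or.inl ⟨hadj.2.2, hadj.symm.reachable.trans (ha.resolve_right hadj.2.1).2⟩

lemma compOf_union_diff (G : SimpleGraph V) (B : Set V) (w : V) :
    (compOf G B w ∪ B) \ B = compOf G B w := by
  rw [union_sdiff_right, sdiff_eq_left]
  exact disjoint_left.mpr fun _ hx => hx.1

lemma psdPropTime_le_iff_forall_compOf (hB : IsPSDForcingSet G B) {t : ℕ} :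
    psdPropTime G B ≤ t ↔ ∀ w ∈ Bᶜ, psdPropTimeOn G (compOf G B w ∪ B) B ≤ t := by
  simp only [psdPropTime_le_iff hB,
    psdPropTimeOn_le_iff hB subset_union_right closedUnderAdj_compOf_union]
  refine ⟨fun h w _ => h ▸ subset_univ _, fun h => eq_univ_of_forall fun x => ?_⟩
  by_cases hx : x ∈ B
  · exact subset_iterate_psdStep G B t hx
  · exact h x hx (Or.inl (mem_compOf_self hx))

end Components

/-- `pt_+(G;B)` equals the maximum over components `C` of `G - B` of
`pt_+(G[V(C) ∪ B]; B)`, and is at most the maximum number of vertices in a component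
of `G - B`. -/
theorem stmt3 [Fintype V] (G : SimpleGraph V) (B : Set V) (hB : IsPSDForcingSet G B) :
    psdPropTime G B =
      sSup ((fun w => psdPropTimeOn G (compOf G B w ∪ B) B) '' Bᶜ) ∧
    psdPropTime G B ≤ sSup ((fun w => (compOf G B w).ncard) '' Bᶜ) := by
  have hbdd (f : V → ℕ) : BddAbove (f '' Bᶜ) := (toFinite _).bddAbove
  have heq : psdPropTime G B = sSup ((fun w => psdPropTimeOn G (compOf G B w ∪ B) B) '' Bᶜ) :=
    eq_of_forall_ge_iff fun t => by
      rw [psdPropTime_le_iff_forall_compOf hB, csSup_le_iff' (hbdd _), forall_mem_image]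
  refine ⟨heq, (psdPropTime_le_iff_forall_compOf hB).mpr fun w hw => ?_⟩
  calc psdPropTimeOn G (compOf G B w ∪ B) B
      ≤ (compOf G B w).ncard := by
        simpa only [compOf_union_diff] using
          psdPropTimeOn_le_ncard_diff hB subset_union_right closedUnderAdj_compOf_union
    _ ≤ sSup ((fun w => (compOf G B w).ncard) '' Bᶜ) :=
        le_csSup (hbdd _) (mem_image_of_mem _ hw)
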